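/- arXiv:1802.07472 — 2 statements merged into one kernel-verified Lean document; each statement's English description precedes it below -/
import Mathlib

section
/- Let θ_m = θ̄ ∈ (0, π/2) with sin θ̄ > 4/5, and r_m > 0. Then the interval (1 - sin θ̄, sin θ̄ / 4) is nonempty, and for any k with (1 - sin θ̄)/r_m < k < sin θ̄/(4 r_m), the circular arc of constant curvature k starting at angle θ̄ and continued until the angle reaches π/2 satisfies: (i) the radial coordinate r(s) = r_m - (1/k)(sin θ(s) - sin θ̄) remains positive, and (ii) k < sin θ(s) / (4 r(s)) throughout the arc. -/
open Real Set

theorem final_bend (θbar rm : ℝ) (hθbar : θbar ∈ Ioo 0 (π / 2))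
    (hsin : Real.sin θbar > 4 / 5) (hrm : 0 < rm) :
    1 - Real.sin θbar < Real.sin θbar / 4 ∧
    ∀ k : ℝ, (1 - Real.sin θbar) / rm < k → k < Real.sin θbar / (4 * rm) →
      ∀ θ ∈ Icc θbar (π / 2),
        0 < rm - (1 / k) * (Real.sin θ - Real.sin θbar) ∧
        k < Real.sin θ / (4 * (rm - (1 / k) * (Real.sin θ - Real.sin θbar))) := by
  obtain ⟨hθ0, hθπ⟩ := hθbar
  have hs1 : Real.sin θbar < 1 := by
    have := Real.sin_lt_sin_of_lt_of_le_pi_div_two (x := θbar) (y := π / 2)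
      (by linarith [Real.pi_pos]) le_rfl hθπ
    rwa [Real.sin_pi_div_two] at this
  constructor
  · linarith
  intro k hk1 hk2 θ hθ
  have hmono : Real.sin θbar ≤ Real.sin θ :=
    Real.sin_le_sin_of_le_of_le_pi_div_two (by linarith [Real.pi_pos]) hθ.2 hθ.1
  have hsle1 : Real.sin θ ≤ 1 := Real.sin_le_one θ
  have hkpos : 0 < k := lt_trans (div_pos (by linarith) hrm) hk1
  have hkrm : 1 - Real.sin θbar < k * rm := by
    rw [div_lt_iff₀ hrm] at hk1; linarith
  have hr : 0 < rm - (1 / k) * (Real.sin θ - Real.sin θbar) := by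
    have h1 : Real.sin θ - Real.sin θbar < k * rm := by linarith
    have h2 : (1 / k) * (Real.sin θ - Real.sin θbar) < (1 / k) * (k * rm) :=
      mul_lt_mul_of_pos_left h1 (by positivity)
    have h3 : (1 / k) * (k * rm) = rm := by field_simp
    linarith
  refine ⟨hr, ?_⟩
  rw [lt_div_iff₀ (by positivity)]
  have hkrm2 : 4 * (k * rm) < Real.sin θbar := by
    rw [lt_div_iff₀ (by positivity)] at hk2; linarith
  have hexp : k * (4 * (rm - (1 / k) * (Real.sin θ - Real.sin θbar)))
      = 4 * (k * rm) - 4 * (Real.sin θ - Real.sin θbar) := by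
    field_simp
  rw [hexp]
  linarith
end

section
/- Suppose κ^D ≥ κ₀ > 0, and there are constants A, B > 0 such that for all 0 < r ≤ δ₀, θ ∈ [0, π/2], k ≥ 0, the quantity κ = κ^D - 2 Ric·sin²θ + (n-1)(n-2)(1/r² + E₁) sin²θ - (n-1)(1/r + E₂ r) k sin θ with |Ric| ≤ A, |E₁| ≤ A, |E₂| ≤ B satisfies: if δ₀ is small enough (depending only on n, κ₀, A, B) and sin θ / (4r) > k, then κ > 0. Prove this implication for n ≥ 3. -/
open Real Set

set_option maxHeartbeats 800000

theorem sufficient_condition_for_positive_scalar_curvature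
    (n : ℕ) (hn : 3 ≤ n) (κ₀ A B : ℝ) (hκ₀ : 0 < κ₀) (hA : 0 < A) (hB : 0 < B) :
    ∃ δ₀ > 0, ∀ r θ k κD Ric E₁ E₂ : ℝ,
      0 < r → r ≤ δ₀ → θ ∈ Icc 0 (π / 2) → 0 ≤ k → κ₀ ≤ κD →
      |Ric| ≤ A → |E₁| ≤ A → |E₂| ≤ B →
      Real.sin θ / (4 * r) > k →
      0 < κD - 2 * Ric * Real.sin θ ^ 2
          + ((n : ℝ) - 1) * ((n : ℝ) - 2) * (1 / r ^ 2 + E₁) * Real.sin θ ^ 2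
          - ((n : ℝ) - 1) * (1 / r + E₂ * r) * k * Real.sin θ := by
  set m : ℝ := (n : ℝ) with hm
  have hm3 : (3 : ℝ) ≤ m := by rw [hm]; exact_mod_cast hn
  have hm12 : (0:ℝ) ≤ (m - 1) * (m - 2) := by nlinarith
  set C : ℝ := ((m - 1) * (m - 2) + 2) * A with hC
  have hCpos : 0 < C := by
    have h2 : (0:ℝ) < (m - 1) * (m - 2) + 2 := by nlinarith
    rw [hC]; exact mul_pos h2 hA
  refine ⟨min (Real.sqrt (1 / B)) (Real.sqrt (1 / C)),
    lt_min (Real.sqrt_pos.mpr (by positivity)) (Real.sqrt_pos.mpr (by positivity)),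
    ?_⟩
  intro r θ k κD Ric E₁ E₂ hr hrδ hθ hk hκD hRic hE₁ hE₂ hks
  set S : ℝ := Real.sin θ with hS
  obtain ⟨hθ0, hθ1⟩ := hθ
  have hS0 : 0 ≤ S := Real.sin_nonneg_of_nonneg_of_le_pi hθ0 (hθ1.trans (by linarith [Real.pi_pos]))
  have hS1 : S ≤ 1 := Real.sin_le_one θ
  have hr2 : (0:ℝ) < r ^ 2 := by positivity
  -- bounds on r^2 from δ₀
  have hrB : B * r ^ 2 ≤ 1 := by
    have h1 : r ≤ Real.sqrt (1 / B) := hrδ.trans (min_le_left _ _)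
    have h2 : r ^ 2 ≤ 1 / B := by
      have := Real.sq_sqrt (le_of_lt (show (0:ℝ) < 1 / B by positivity))
      nlinarith [Real.sqrt_nonneg (1 / B)]
    rw [le_div_iff₀ hB] at h2
    nlinarith
  have hrC : C * r ^ 2 ≤ 1 := by
    have h1 : r ≤ Real.sqrt (1 / C) := hrδ.trans (min_le_right _ _)
    have h2 : r ^ 2 ≤ 1 / C := by
      have := Real.sq_sqrt (le_of_lt (show (0:ℝ) < 1 / C by positivity))
      nlinarith [Real.sqrt_nonneg (1 / C)]
    rw [le_div_iff₀ hCpos] at h2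
    nlinarith
  rw [hC] at hrC
  have hRic' := abs_le.mp hRic
  have hE₁' := abs_le.mp hE₁
  have hE₂' := abs_le.mp hE₂
  -- S > 0 since 0 ≤ k < S/(4r)
  have hSpos : 0 < S := by
    rcases lt_or_eq_of_le hS0 with h | h
    · exact h
    · exfalso; rw [← h, zero_div] at hks; linarith
  have hku : 4 * r * k < S := by
    have h4r : (0:ℝ) < 4 * r := by linarith
    have h := (lt_div_iff₀ h4r).mp hks
    linarith
  -- key product bound: 4 * (r*k*S) ≤ S^2
  have hu0 : 0 ≤ r * k * S := by positivity
  have hu : 4 * (r * k * S) ≤ S ^ 2 := by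
    nlinarith [mul_le_mul_of_nonneg_left hku.le hS0]
  -- E₂ bound
  have hE2r : E₂ * r ^ 2 ≤ 1 := by
    nlinarith [mul_le_mul_of_nonneg_right hE₂'.2 hr2.le]
  have hE2r' : -1 ≤ E₂ * r ^ 2 := by
    nlinarith [mul_le_mul_of_nonneg_right hE₂'.1 hr2.le]
  -- coefficient bound
  have hcoef : (m - 1) / 2 ≤ -2 * Ric * r ^ 2 + (m - 1) * (m - 2) * (1 + E₁ * r ^ 2) := by
    have h1 : Ric * r ^ 2 ≤ A * r ^ 2 := mul_le_mul_of_nonneg_right hRic'.2 hr2.le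
    have h2 : -A * r ^ 2 ≤ E₁ * r ^ 2 := mul_le_mul_of_nonneg_right hE₁'.1 hr2.le
    have h3 : (m - 1) * (m - 2) * (-A * r ^ 2) ≤ (m - 1) * (m - 2) * (E₁ * r ^ 2) :=
      mul_le_mul_of_nonneg_left h2 hm12
    nlinarith [mul_nonneg (by linarith : (0:ℝ) ≤ m - 3) (by linarith : (0:ℝ) ≤ 2 * m - 1)]
  -- the r²-cleared inequality
  have key : 0 < κD * r ^ 2 - 2 * Ric * S ^ 2 * r ^ 2
      + (m - 1) * (m - 2) * (1 + E₁ * r ^ 2) * S ^ 2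
      - (m - 1) * (1 + E₂ * r ^ 2) * (r * k * S) := by
    have hP0 : 0 ≤ (m - 1) * (1 + E₂ * r ^ 2) :=
      mul_nonneg (by linarith) (by linarith)
    have hP2 : (m - 1) * (1 + E₂ * r ^ 2) ≤ 2 * (m - 1) := by nlinarith
    have h1 : (m - 1) * (1 + E₂ * r ^ 2) * (r * k * S) ≤ 2 * (m - 1) * (r * k * S) :=
      mul_le_mul_of_nonneg_right hP2 hu0
    have h2 : 2 * (m - 1) * (r * k * S) ≤ (m - 1) / 2 * S ^ 2 := by nlinarith
    have h3 : (m - 1) / 2 * S ^ 2 ≤ (-2 * Ric * r ^ 2 + (m - 1) * (m - 2) * (1 + E₁ * r ^ 2)) * S ^ 2 :=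
      mul_le_mul_of_nonneg_right hcoef (sq_nonneg S)
    linarith [h1, h2, h3, mul_pos (lt_of_lt_of_le hκ₀ hκD) hr2]
  have hrne : r ≠ 0 := ne_of_gt hr
  have hgoal : (κD - 2 * Ric * S ^ 2
      + (m - 1) * (m - 2) * (1 / r ^ 2 + E₁) * S ^ 2
      - (m - 1) * (1 / r + E₂ * r) * k * S) * r ^ 2
      = κD * r ^ 2 - 2 * Ric * S ^ 2 * r ^ 2
      + (m - 1) * (m - 2) * (1 + E₁ * r ^ 2) * S ^ 2
      - (m - 1) * (1 + E₂ * r ^ 2) * (r * k * S) := by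
    field_simp
  rw [← hgoal] at key
  exact (mul_pos_iff_of_pos_right hr2).mp key
end
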